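/- Suppose the sequences a_1, ..., a_ℓ : ℕ → ℤ are good for irrational equidistribution, i.e., for all t_1, ..., t_ℓ ∈ [0,1) not all rational, lim_{N→∞} (1/N) ∑_{n=1}^N e(a_1(n)t_1 + ... + a_ℓ(n)t_ℓ) = 0. Fix k ∈ ℕ and for i = 1,...,ℓ define b_i(n) := ∑_{r=0}^{k−1} 1_{kℤ+r}(a_i(n)) · (a_i(n)−r)/k. Then b_1, ..., b_ℓ are also good for irrational equidistribution. -/

import Mathlib

/-!
Write `e(x) = exp(2πix)`. For an integer `A` with quotient `q` and remainder `r` modulo `k`,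
orthogonality of the `k`-th roots of unity gives
`e(q t) = (1/k) ∑_{ρ<k} 1[ρ = r] e((A - ρ) t / k) = ∑_{s<k} c_s(t) e(A (t + s) / k)`
with coefficients `c_s(t) = (1/k) ∑_{ρ<k} e(-ρ (t + s) / k)` that do not depend on `A`.
Taking products over the coordinates, each exponential sum of the quotient sequences at
`t ∈ [0,1)^ℓ` is a fixed finite linear combination of exponential sums of the original sequences
at the frequencies `(t_j + s_j) / k`, which still lie in `[0,1)` and are irrational wherever
`t_j` is.
-/

open Filter

/-- The sequences `a₁, …, a_ℓ : ℕ → ℤ` are good for irrational equidistribution: for all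
`t₁, …, t_ℓ ∈ [0,1)` not all rational, `(1/N) ∑_{n=1}^N e(a₁(n)t₁ + ⋯ + a_ℓ(n)t_ℓ) → 0`. -/
def GoodForIrrationalEquidistribution (ℓ : ℕ) (a : Fin ℓ → ℕ → ℤ) : Prop :=
  ∀ t : Fin ℓ → ℝ, (∀ j, t j ∈ Set.Ico (0 : ℝ) 1) → (∃ j, Irrational (t j)) →
    Tendsto (fun N : ℕ => (N : ℂ)⁻¹ * ∑ n ∈ Finset.Icc 1 N,
      Complex.exp (2 * ↑Real.pi * Complex.I * ↑(∑ j, ((a j n : ℤ) : ℝ) * t j))) atTop (nhds 0)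

open Finset

noncomputable def expTwoPiI (x : ℝ) : ℂ := Complex.exp (2 * Real.pi * Complex.I * x)

lemma expTwoPiI_add (x y : ℝ) : expTwoPiI (x + y) = expTwoPiI x * expTwoPiI y := by
  simp only [expTwoPiI, ← Complex.exp_add]
  push_cast
  ring_nf

lemma expTwoPiI_sum {ι : Type*} (s : Finset ι) (f : ι → ℝ) :
    expTwoPiI (∑ i ∈ s, f i) = ∏ i ∈ s, expTwoPiI (f i) := by
  simp only [expTwoPiI]
  push_cast
  rw [mul_sum, Complex.exp_sum]

lemma expTwoPiI_natCast_mul (n : ℕ) (x : ℝ) : expTwoPiI (n * x) = expTwoPiI x ^ n := by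
  simp only [expTwoPiI, ← Complex.exp_nat_mul]
  push_cast
  ring_nf

lemma expTwoPiI_eq_one_iff {x : ℝ} : expTwoPiI x = 1 ↔ ∃ m : ℤ, x = m := by
  have h2πI : 2 * (Real.pi : ℂ) * Complex.I ≠ 0 := by simp [Real.pi_ne_zero]
  simp only [expTwoPiI, Complex.exp_eq_one_iff, mul_comm _ (2 * (Real.pi : ℂ) * Complex.I),
    mul_right_inj' h2πI]
  exact exists_congr fun m => by exact_mod_cast Iff.rfl

lemma sum_range_expTwoPiI_mul_div {k : ℕ} (hk : 0 < k) (m : ℤ) :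
    ∑ s ∈ range k, expTwoPiI (m * s / k) = if (k : ℤ) ∣ m then (k : ℂ) else 0 := by
  have hk₀ : (k : ℝ) ≠ 0 := by positivity
  have hpow (s : ℕ) : expTwoPiI (m * s / k) = expTwoPiI (m / k) ^ s := by
    rw [← expTwoPiI_natCast_mul]; ring_nf
  simp_rw [hpow]
  split_ifs with hdvd
  · obtain ⟨c, rfl⟩ := hdvd
    have hc : expTwoPiI (((k * c : ℤ) : ℝ) / k) = 1 :=
      expTwoPiI_eq_one_iff.2 ⟨c, by push_cast; field_simp⟩
    simp only [hc, one_pow, sum_const, card_range, nsmul_eq_mul, mul_one]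
  · have hne : expTwoPiI (m / k) ≠ 1 := by
      rw [Ne, expTwoPiI_eq_one_iff]
      rintro ⟨c, hc⟩
      exact hdvd ⟨c, by rw [div_eq_iff hk₀] at hc; exact_mod_cast hc.trans (mul_comm _ _)⟩
    have hk_pow : expTwoPiI (m / k) ^ k = 1 := by
      rw [← expTwoPiI_natCast_mul, mul_div_cancel₀ _ hk₀]
      exact expTwoPiI_eq_one_iff.2 ⟨m, rfl⟩
    rw [geom_sum_eq hne, hk_pow, sub_self, zero_div]

lemma Int.emod_eq_natCast_iff_dvd_sub {k r : ℕ} (hr : r < k) (A : ℤ) :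
    A % k = r ↔ (k : ℤ) ∣ A - r := by
  have hr' : (r : ℤ) % k = r := Int.emod_eq_of_lt (Int.natCast_nonneg r) (by exact_mod_cast hr)
  conv_lhs => rw [← hr']
  exact Int.modEq_comm.trans Int.modEq_iff_dvd

lemma sum_range_ite_emod_eq {M : Type*} [AddCommMonoid M] {k : ℕ} (hk : 0 < k) (A : ℤ)
    (f : ℤ → M) : ∑ r ∈ range k, (if A % k = r then f r else 0) = f (A % k) := by
  have h₀ : 0 ≤ A % k := Int.emod_nonneg A (by exact_mod_cast hk.ne')
  have h₁ : A % k < k := Int.emod_lt_of_pos A (by exact_mod_cast hk)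
  rw [sum_eq_single (A % k).toNat]
  · rw [Int.toNat_of_nonneg h₀, if_pos rfl]
  · intro r _ hr
    exact if_neg (by omega)
  · intro h
    exact absurd (mem_range.2 (by omega)) h

lemma sum_range_ite_emod_eq_ediv {k : ℕ} (hk : 0 < k) (A : ℤ) :
    (∑ r ∈ range k, if A % (k : ℤ) = (r : ℤ) then (A - (r : ℤ)) / (k : ℤ) else 0) = A / k := by
  rw [sum_range_ite_emod_eq hk A fun r => (A - r) / k, Int.emod_def, sub_sub_cancel,
    Int.mul_ediv_cancel_left _ (by exact_mod_cast hk.ne')]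

noncomputable def shiftWeight (k : ℕ) (t : ℝ) (s : ℕ) : ℂ :=
  (k : ℂ)⁻¹ * ∑ ρ ∈ range k, expTwoPiI (-(ρ * ((t + s) / k)))

lemma expTwoPiI_ediv_mul {k : ℕ} (hk : 0 < k) (A : ℤ) (t : ℝ) :
    expTwoPiI ((A / k : ℤ) * t) =
      ∑ s ∈ range k, shiftWeight k t s * expTwoPiI (A * ((t + s) / k)) := by
  have hk₀ : (k : ℂ) ≠ 0 := by exact_mod_cast hk.ne'
  have hsplit (ρ s : ℕ) : expTwoPiI (-(ρ * ((t + s) / k))) * expTwoPiI (A * ((t + s) / k)) =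
      expTwoPiI ((A - ρ : ℤ) * t / k) * expTwoPiI ((A - ρ : ℤ) * s / k) := by
    rw [← expTwoPiI_add, ← expTwoPiI_add]; push_cast; ring_nf
  have hquot : ((A / k : ℤ) : ℝ) * t = ((A - A % k : ℤ) : ℝ) * t / k := by
    rw [Int.emod_def, sub_sub_cancel]; push_cast; field_simp
  calc expTwoPiI ((A / k : ℤ) * t)
      = (k : ℂ)⁻¹ * ∑ ρ ∈ range k,
          if A % k = ρ then expTwoPiI ((A - ρ : ℤ) * t / k) * k else 0 := by
        rw [sum_range_ite_emod_eq hk A fun ρ => expTwoPiI ((A - ρ : ℤ) * t / k) * k, ← hquot]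
        field_simp
    _ = (k : ℂ)⁻¹ * ∑ ρ ∈ range k,
          expTwoPiI ((A - ρ : ℤ) * t / k) * ∑ s ∈ range k, expTwoPiI ((A - ρ : ℤ) * s / k) := by
        congr 1
        refine sum_congr rfl fun ρ hρ => ?_
        simp only [sum_range_expTwoPiI_mul_div hk,
          ← Int.emod_eq_natCast_iff_dvd_sub (mem_range.1 hρ), mul_ite, mul_zero]
    _ = _ := by
        simp_rw [shiftWeight, mul_assoc, sum_mul, hsplit, mul_sum]
        rw [sum_comm]

lemma expTwoPiI_sum_ediv_mul {ι : Type*} [Fintype ι] [DecidableEq ι] {k : ℕ} (hk : 0 < k)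
    (A : ι → ℤ) (t : ι → ℝ) :
    expTwoPiI (∑ j, (A j / k : ℤ) * t j) =
      ∑ g ∈ Fintype.piFinset fun _ => range k,
        (∏ j, shiftWeight k (t j) (g j)) * expTwoPiI (∑ j, A j * ((t j + g j) / k)) := by
  simp_rw [expTwoPiI_sum, expTwoPiI_ediv_mul hk, prod_univ_sum, prod_mul_distrib]

lemma add_natCast_div_mem_Ico {t : ℝ} (ht : t ∈ Set.Ico 0 1) {s k : ℕ} (hs : s < k) :
    (t + s) / k ∈ Set.Ico (0 : ℝ) 1 := by
  have hk : (0 : ℝ) < k := by exact_mod_cast (Nat.zero_le s).trans_lt hs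
  have hs' : (s : ℝ) + 1 ≤ k := by exact_mod_cast hs
  exact ⟨div_nonneg (by linarith [ht.1]) hk.le, (div_lt_one hk).2 (by linarith [ht.2])⟩

/-- If `a₁, …, a_ℓ` are good for irrational equidistribution and `k ≥ 1`, then so are the
sequences `b_i(n) = ∑_{r=0}^{k-1} 1_{kℤ+r}(a_i(n)) (a_i(n) − r)/k` (the integer quotients of
the `a_i(n)` by `k`). -/
theorem stmt15 (ℓ : ℕ) (a : Fin ℓ → ℕ → ℤ)
    (ha : GoodForIrrationalEquidistribution ℓ a) (k : ℕ) (hk : 0 < k) :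
    GoodForIrrationalEquidistribution ℓ (fun i n => ∑ r ∈ Finset.range k,
      if a i n % (k : ℤ) = (r : ℤ) then (a i n - (r : ℤ)) / (k : ℤ) else 0) := by
  rintro t ht ⟨j, hj⟩
  simp only [sum_range_ite_emod_eq_ediv hk]
  have hterm := fun g (hg : g ∈ Fintype.piFinset fun _ : Fin ℓ => range k) =>
    (ha (fun i => (t i + g i) / k)
      (fun i => add_natCast_div_mem_Ico (ht i) (mem_range.1 (Fintype.mem_piFinset.1 hg i)))
      ⟨j, (hj.add_natCast _).div_natCast hk.ne'⟩).const_mul (∏ i, shiftWeight k (t i) (g i))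
  have hlim := tendsto_finsetSum _ hterm
  simp only [mul_zero, sum_const_zero] at hlim
  refine hlim.congr fun N => ?_
  change _ = _ * ∑ n ∈ Icc 1 N, expTwoPiI _
  simp_rw [expTwoPiI_sum_ediv_mul hk, mul_sum, mul_left_comm (N : ℂ)⁻¹]
  exact sum_comm
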